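/- arXiv:2205.10772 — 5 statements merged into one kernel-verified Lean document; each statement's English description precedes it below -/
import Mathlib

section
/- Let L be a real inner product space, let m' ≤ m be positive integers, let Ψ : {1,…,m'} → L and Ĝ : {1,…,m} → L be families of vectors, and let Ξ be a real m × m' matrix such that a‖θ‖ ≤ ‖Ξθ‖ ≤ b‖θ‖ for all θ ∈ ℝ^{m'}, where 0 < a ≤ b. Set ε := (∑_{j=1}^{m} ‖Ĝ_j − ∑_{i=1}^{m'} Ξ_{ji} Ψ_i‖²)^{1/2}. Then ΞᵀΞ is invertible, and for every e* ∈ ℝ^{m'}, the vector c := Ξ(ΞᵀΞ)⁻¹e* ∈ ℝ^m and the element g̃ := ∑_{j=1}^{m} c_j Ĝ_j ∈ L satisfy ‖c‖ ≤ (b/a²)‖e*‖ and ‖g̃ − ∑_{i=1}^{m'} e*_i Ψ_i‖ ≤ (b/a²) ‖e*‖ ε. -/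
/-!
Writing `θ = (ΞᵀΞ)⁻¹ e*`, the lower frame bound and Cauchy–Schwarz give
`a² ‖θ‖² ≤ ‖Ξθ‖² = ⟪θ, e*⟫ ≤ ‖θ‖ ‖e*‖`, so `‖θ‖ ≤ ‖e*‖ / a²` (this also shows `ΞᵀΞ` is injective),
and the upper bound gives `‖c‖ = ‖Ξθ‖ ≤ (b / a²) ‖e*‖`. Since `Ξᵀ c = e*`, the error
`g̃ - ∑ e*_i Ψ_i` equals `∑_j c_j (Ĝ_j - ∑_i Ξ_{ji} Ψ_i)`, whose norm is at most `‖c‖ ε`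
by the triangle and Cauchy–Schwarz inequalities.
-/

open scoped BigOperators

/-- The Euclidean norm on `ℝ^n`. -/
noncomputable def euclNorm {n : ℕ} (v : Fin n → ℝ) : ℝ :=
  Real.sqrt (∑ i, v i ^ 2)

open scoped Matrix

lemma euclNorm_nonneg {n : ℕ} (v : Fin n → ℝ) : 0 ≤ euclNorm v :=
  Real.sqrt_nonneg _

lemma sq_euclNorm {n : ℕ} (v : Fin n → ℝ) : euclNorm v ^ 2 = ∑ i, v i ^ 2 :=
  Real.sq_sqrt (Finset.sum_nonneg fun _ _ => sq_nonneg _)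

lemma euclNorm_eq_zero {n : ℕ} {v : Fin n → ℝ} : euclNorm v = 0 ↔ v = 0 := by
  rw [euclNorm, Real.sqrt_eq_zero (Finset.sum_nonneg fun _ _ => sq_nonneg _),
    Finset.sum_eq_zero_iff_of_nonneg fun _ _ => sq_nonneg _]
  simp [funext_iff]

lemma euclNorm_abs {n : ℕ} (v : Fin n → ℝ) : euclNorm (fun i => |v i|) = euclNorm v := by
  simp only [euclNorm, sq_abs]

lemma dotProduct_le_euclNorm_mul_euclNorm {n : ℕ} (v w : Fin n → ℝ) :
    v ⬝ᵥ w ≤ euclNorm v * euclNorm w :=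
  Real.sum_mul_le_sqrt_mul_sqrt _ v w

lemma norm_sum_smul_le_euclNorm_mul {E : Type*} [SeminormedAddCommGroup E] [NormedSpace ℝ E]
    {n : ℕ} (c : Fin n → ℝ) (v : Fin n → E) :
    ‖∑ j, c j • v j‖ ≤ euclNorm c * √(∑ j, ‖v j‖ ^ 2) :=
  calc ‖∑ j, c j • v j‖ ≤ ∑ j, |c j| * ‖v j‖ := by
        simpa only [norm_smul, Real.norm_eq_abs] using norm_sum_le Finset.univ (fun j => c j • v j)
    _ ≤ euclNorm (fun j => |c j|) * euclNorm (fun j => ‖v j‖) :=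
        dotProduct_le_euclNorm_mul_euclNorm _ _
    _ = euclNorm c * √(∑ j, ‖v j‖ ^ 2) := by rw [euclNorm_abs]; rfl

namespace Matrix

lemma sum_smul_sub_sum_vecMul_smul {R M ι κ : Type*} [Ring R] [AddCommGroup M] [Module R M]
    [Fintype ι] [Fintype κ] (A : Matrix ι κ R) (c : ι → R) (G : ι → M) (Ψ : κ → M) :
    ∑ j, c j • G j - ∑ i, (c ᵥ* A) i • Ψ i = ∑ j, c j • (G j - ∑ i, A j i • Ψ i) := by
  simp only [smul_sub, Finset.sum_sub_distrib, Finset.smul_sum, smul_smul, vecMul, dotProduct,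
    Finset.sum_smul]
  rw [Finset.sum_comm (γ := κ)]

variable {m n : ℕ} (Ξ : Matrix (Fin m) (Fin n) ℝ)

lemma dotProduct_transpose_mul_self_mulVec (θ : Fin n → ℝ) :
    θ ⬝ᵥ (Ξᵀ * Ξ) *ᵥ θ = euclNorm (Ξ *ᵥ θ) ^ 2 := by
  rw [← mulVec_mulVec, dotProduct_mulVec, vecMul_transpose, sq_euclNorm]
  simp only [dotProduct, sq]

lemma sq_mul_euclNorm_le_euclNorm_transpose_mul_self_mulVec {a : ℝ} (ha : 0 ≤ a)
    (hlow : ∀ θ, a * euclNorm θ ≤ euclNorm (Ξ *ᵥ θ)) (θ : Fin n → ℝ) :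
    a ^ 2 * euclNorm θ ≤ euclNorm ((Ξᵀ * Ξ) *ᵥ θ) := by
  have hθ := euclNorm_nonneg θ
  have h : a ^ 2 * euclNorm θ ^ 2 ≤ euclNorm θ * euclNorm ((Ξᵀ * Ξ) *ᵥ θ) :=
    calc a ^ 2 * euclNorm θ ^ 2 = (a * euclNorm θ) ^ 2 := by ring
      _ ≤ euclNorm (Ξ *ᵥ θ) ^ 2 := pow_le_pow_left₀ (by positivity) (hlow θ) 2
      _ = θ ⬝ᵥ (Ξᵀ * Ξ) *ᵥ θ := (dotProduct_transpose_mul_self_mulVec Ξ θ).symm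
      _ ≤ _ := dotProduct_le_euclNorm_mul_euclNorm _ _
  rcases hθ.eq_or_lt with h0 | h0
  · rw [← h0, mul_zero]
    exact euclNorm_nonneg _
  · nlinarith

lemma isUnit_transpose_mul_self {a : ℝ} (ha : 0 < a)
    (hlow : ∀ θ, a * euclNorm θ ≤ euclNorm (Ξ *ᵥ θ)) : IsUnit (Ξᵀ * Ξ) := by
  refine mulVec_injective_iff_isUnit.mp fun θ θ' hθ => sub_eq_zero.mp (euclNorm_eq_zero.mp ?_)
  have h := sq_mul_euclNorm_le_euclNorm_transpose_mul_self_mulVec Ξ ha.le hlow (θ - θ')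
  rw [mulVec_sub, hθ, sub_self, euclNorm_eq_zero.mpr rfl] at h
  nlinarith [euclNorm_nonneg (θ - θ'), pow_pos ha 2]

lemma transpose_mul_self_mulVec_inv_mulVec {a : ℝ} (ha : 0 < a)
    (hlow : ∀ θ, a * euclNorm θ ≤ euclNorm (Ξ *ᵥ θ)) (e : Fin n → ℝ) :
    (Ξᵀ * Ξ) *ᵥ ((Ξᵀ * Ξ)⁻¹ *ᵥ e) = e := by
  have hM := (isUnit_iff_isUnit_det _).mp (isUnit_transpose_mul_self Ξ ha hlow)
  rw [mulVec_mulVec, mul_nonsing_inv _ hM, one_mulVec]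

lemma euclNorm_mulVec_inv_mulVec_le {a b : ℝ} (ha : 0 < a) (hb : 0 ≤ b)
    (hlow : ∀ θ, a * euclNorm θ ≤ euclNorm (Ξ *ᵥ θ))
    (hup : ∀ θ, euclNorm (Ξ *ᵥ θ) ≤ b * euclNorm θ) (e : Fin n → ℝ) :
    euclNorm (Ξ *ᵥ ((Ξᵀ * Ξ)⁻¹ *ᵥ e)) ≤ b / a ^ 2 * euclNorm e := by
  set θ := (Ξᵀ * Ξ)⁻¹ *ᵥ e
  have hθ : a ^ 2 * euclNorm θ ≤ euclNorm e :=
    (sq_mul_euclNorm_le_euclNorm_transpose_mul_self_mulVec Ξ ha.le hlow θ).trans_eq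
      (congrArg euclNorm (transpose_mul_self_mulVec_inv_mulVec Ξ ha hlow e))
  calc euclNorm (Ξ *ᵥ θ) ≤ b * euclNorm θ := hup θ
    _ ≤ b * (euclNorm e / a ^ 2) :=
        mul_le_mul_of_nonneg_left ((le_div_iff₀ (by positivity)).mpr (by linarith)) hb
    _ = b / a ^ 2 * euclNorm e := by ring

end Matrix

open Matrix

theorem stmt0_general
    {L : Type*} [NormedAddCommGroup L] [InnerProductSpace ℝ L]
    {m m' : ℕ}
    (Ψ : Fin m' → L) (Ghat : Fin m → L)
    (Ξ : Matrix (Fin m) (Fin m') ℝ)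
    (a b : ℝ) (ha : 0 < a) (hab : a ≤ b)
    (hlow : ∀ θ : Fin m' → ℝ, a * euclNorm θ ≤ euclNorm (Ξ.mulVec θ))
    (hup : ∀ θ : Fin m' → ℝ, euclNorm (Ξ.mulVec θ) ≤ b * euclNorm θ)
    (ε : ℝ)
    (hε : ε = Real.sqrt (∑ j : Fin m, ‖Ghat j - ∑ i : Fin m', Ξ j i • Ψ i‖ ^ 2)) :
    IsUnit (Ξ.transpose * Ξ) ∧
      ∀ estar : Fin m' → ℝ,
        euclNorm (Ξ.mulVec ((Ξ.transpose * Ξ)⁻¹.mulVec estar)) ≤ (b / a ^ 2) * euclNorm estar ∧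
        ‖(∑ j : Fin m, Ξ.mulVec ((Ξ.transpose * Ξ)⁻¹.mulVec estar) j • Ghat j)
            - ∑ i : Fin m', estar i • Ψ i‖ ≤ (b / a ^ 2) * euclNorm estar * ε := by
  refine ⟨isUnit_transpose_mul_self Ξ ha hlow, fun estar => ?_⟩
  have hc := euclNorm_mulVec_inv_mulVec_le Ξ ha (ha.le.trans hab) hlow hup estar
  refine ⟨hc, ?_⟩
  set c := Ξ *ᵥ ((Ξᵀ * Ξ)⁻¹ *ᵥ estar)
  have hcΞ : c ᵥ* Ξ = estar := by
    rw [← mulVec_transpose, mulVec_mulVec, transpose_mul_self_mulVec_inv_mulVec Ξ ha hlow]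
  calc _ = ‖∑ j, c j • (Ghat j - ∑ i, Ξ j i • Ψ i)‖ := by
        rw [← sum_smul_sub_sum_vecMul_smul, hcΞ]
    _ ≤ euclNorm c * ε := hε ▸ norm_sum_smul_le_euclNorm_mul c _
    _ ≤ b / a ^ 2 * euclNorm estar * ε := mul_le_mul_of_nonneg_right hc (hε ▸ Real.sqrt_nonneg _)

/-- Deterministic core of Theorem 1 (approximation error of the learned kernel):
if the Gaussian coefficient matrix `Ξ` has all singular values in `[a, b]`, then `ΞᵀΞ` is
invertible, and the least-squares reconstruction `g̃ = ∑ c_j Ghat_j`, `c = Ξ(ΞᵀΞ)⁻¹ e*`,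
approximates `∑ e*_i Ψ_i` up to `(b/a²)·‖e*‖·ε`, where `ε` is the aggregate estimation error
of the `Ghat_j`. -/
theorem stmt0
    {L : Type*} [NormedAddCommGroup L] [InnerProductSpace ℝ L]
    {m m' : ℕ} (hm' : 0 < m') (hmm : m' ≤ m)
    (Ψ : Fin m' → L) (Ghat : Fin m → L)
    (Ξ : Matrix (Fin m) (Fin m') ℝ)
    (a b : ℝ) (ha : 0 < a) (hab : a ≤ b)
    (hlow : ∀ θ : Fin m' → ℝ, a * euclNorm θ ≤ euclNorm (Ξ.mulVec θ))
    (hup : ∀ θ : Fin m' → ℝ, euclNorm (Ξ.mulVec θ) ≤ b * euclNorm θ)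
    (ε : ℝ)
    (hε : ε = Real.sqrt (∑ j : Fin m, ‖Ghat j - ∑ i : Fin m', Ξ j i • Ψ i‖ ^ 2)) :
    IsUnit (Ξ.transpose * Ξ) ∧
      ∀ estar : Fin m' → ℝ,
        euclNorm (Ξ.mulVec ((Ξ.transpose * Ξ)⁻¹.mulVec estar)) ≤ (b / a ^ 2) * euclNorm estar ∧
        ‖(∑ j : Fin m, Ξ.mulVec ((Ξ.transpose * Ξ)⁻¹.mulVec estar) j • Ghat j)
            - ∑ i : Fin m', estar i • Ψ i‖ ≤ (b / a ^ 2) * euclNorm estar * ε :=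
  stmt0_general Ψ Ghat Ξ a b ha hab hlow hup ε hε
end

section
/- Let L be a real inner product space, m and m' positive integers, S a real m × m' matrix, and h : {1,…,m} → L. Let e = (e_1,…,e_{m'}) be a random vector whose coordinates are independent standard Gaussian random variables. Then E‖∑_{j=1}^{m} (S e)_j h_j‖² = ∑_{j,k=1}^{m} (S Sᵀ)_{jk} ⟨h_j, h_k⟩ ≤ ‖S‖_{op}² ∑_{j=1}^{m} ‖h_j‖², where ‖S‖_{op} := sup_{‖θ‖≤1} ‖Sθ‖ is the operator norm of S with respect to Euclidean norms. -/
open scoped BigOperators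
open MeasureTheory ProbabilityTheory

/-!
Expanding the square gives `E‖∑ⱼ Xⱼ hⱼ‖² = ∑ⱼₖ E[Xⱼ Xₖ] ⟪hⱼ, hₖ⟫`, and for `X = S e` with
`E[eᵢ eₗ] = δᵢₗ` the covariance is `E[Xⱼ Xₖ] = (S Sᵀ)ⱼₖ`.

The supremum in the bound is the `L²` operator norm `‖S‖`. Since `‖Sᵀ x‖ ≤ ‖S‖ ‖x‖`, the matrix
`‖S‖² I - S Sᵀ` is positive semidefinite, and so is the Gram matrix of `h`. By the Schur product
theorem so is their entrywise product, hence the sum of its entries,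
`‖S‖² ∑ⱼ ‖hⱼ‖² - ∑ⱼₖ (S Sᵀ)ⱼₖ ⟪hⱼ, hₖ⟫`, is nonnegative.
-/

section

open Finset
open scoped InnerProductSpace NNReal ENNReal Matrix

lemma ProbabilityTheory.hasLaw_of_map_eq {Ω 𝓧 : Type*} [MeasurableSpace Ω] [MeasurableSpace 𝓧]
    {P : Measure Ω} {X : Ω → 𝓧} {μ : Measure 𝓧} [NeZero μ] (h : P.map X = μ) : HasLaw X μ P :=
  ⟨.of_map_ne_zero (h ▸ NeZero.ne μ), h⟩

namespace ProbabilityTheory.HasLaw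

variable {Ω : Type*} [MeasurableSpace Ω] {P : Measure Ω} {X : Ω → ℝ} {μ : ℝ} {v : ℝ≥0}

lemma memLp_of_gaussianReal (hX : HasLaw X (gaussianReal μ v) P) (p : ℝ≥0) :
    MemLp X p P :=
  (memLp_map_measure_iff aestronglyMeasurable_id hX.aemeasurable).mp
    (hX.map_eq ▸ memLp_id_gaussianReal p)

lemma integral_of_gaussianReal (hX : HasLaw X (gaussianReal μ v) P) :
    ∫ ω, X ω ∂P = μ := by
  rw [hX.integral_eq, integral_id_gaussianReal]

lemma integral_sq_of_gaussianReal (hX : HasLaw X (gaussianReal 0 v) P) :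
    ∫ ω, X ω ^ 2 ∂P = v := by
  rw [← variance_of_integral_eq_zero hX.aemeasurable hX.integral_of_gaussianReal,
    hX.variance_eq, variance_id_gaussianReal]

end ProbabilityTheory.HasLaw

section Gaussian

variable {Ω : Type*} [MeasurableSpace Ω] {P : Measure Ω} {ι : Type*} [DecidableEq ι]
  {e : Ω → ι → ℝ}

lemma integral_mul_eq_ite_of_iIndepFun_gaussianReal
    (hlaw : ∀ i, HasLaw (fun ω => e ω i) (gaussianReal 0 1) P)
    (hindep : iIndepFun (fun i ω => e ω i) P) (i l : ι) :
    ∫ ω, e ω i * e ω l ∂P = if i = l then 1 else 0 := by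
  split_ifs with hil
  · subst hil
    simpa [← sq] using (hlaw i).integral_sq_of_gaussianReal
  · rw [(hindep.indepFun hil).integral_fun_mul_eq_mul_integral
      (hlaw i).aemeasurable.aestronglyMeasurable (hlaw l).aemeasurable.aestronglyMeasurable,
      (hlaw i).integral_of_gaussianReal, zero_mul]

end Gaussian

section SecondMoment

variable {Ω : Type*} [MeasurableSpace Ω] {P : Measure Ω} {ι : Type*} [Fintype ι]

lemma integral_sum_sum_mul_mul (a : ι → ι → ℝ) {X : ι → Ω → ℝ} (hX : ∀ j, MemLp (X j) 2 P) :
    ∫ ω, ∑ j, ∑ k, a j k * (X j ω * X k ω) ∂P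
      = ∑ j, ∑ k, a j k * ∫ ω, X j ω * X k ω ∂P := by
  have hint : ∀ j k, Integrable (fun ω => X j ω * X k ω) P :=
    fun j k => (hX j).integrable_mul (hX k)
  rw [integral_finsetSum _ fun j _ => integrable_finsetSum _ fun k _ => (hint j k).const_mul _]
  refine sum_congr rfl fun j _ => ?_
  rw [integral_finsetSum _ fun k _ => (hint j k).const_mul _]
  simp_rw [integral_const_mul]

variable {L : Type*} [NormedAddCommGroup L] [InnerProductSpace ℝ L]

lemma norm_sum_smul_sq (c : ι → ℝ) (h : ι → L) :
    ‖∑ j, c j • h j‖ ^ 2 = ∑ j, ∑ k, ⟪h j, h k⟫_ℝ * (c j * c k) := by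
  simp_rw [← real_inner_self_eq_norm_sq, sum_inner, inner_sum, real_inner_smul_left,
    real_inner_smul_right]
  refine sum_congr rfl fun j _ => sum_congr rfl fun k _ => by ring

lemma integral_norm_sum_smul_sq {X : ι → Ω → ℝ} (hX : ∀ j, MemLp (X j) 2 P) (h : ι → L) :
    ∫ ω, ‖∑ j, X j ω • h j‖ ^ 2 ∂P
      = ∑ j, ∑ k, (∫ ω, X j ω * X k ω ∂P) * ⟪h j, h k⟫_ℝ := by
  simp_rw [norm_sum_smul_sq, integral_sum_sum_mul_mul _ hX, mul_comm ⟪_, _⟫_ℝ]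

variable {κ : Type*} {e : Ω → ι → ℝ}

lemma memLp_mulVec_apply {p : ℝ≥0∞} (he : ∀ i, MemLp (fun ω => e ω i) p P)
    (S : Matrix κ ι ℝ) (j : κ) : MemLp (fun ω => (S *ᵥ e ω) j) p P :=
  memLp_finsetSum univ fun i _ => (he i).const_mul (S j i)

lemma integral_mulVec_mul_mulVec [DecidableEq ι] (he : ∀ i, MemLp (fun ω => e ω i) 2 P)
    (hcov : ∀ i l, ∫ ω, e ω i * e ω l ∂P = if i = l then 1 else 0)
    (S : Matrix κ ι ℝ) (j k : κ) :
    ∫ ω, (S *ᵥ e ω) j * (S *ᵥ e ω) k ∂P = (S * S.transpose) j k := by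
  have hexpand : ∀ ω, (S *ᵥ e ω) j * (S *ᵥ e ω) k
      = ∑ i, ∑ l, S j i * S k l * (e ω i * e ω l) := fun ω => by
    simp only [Matrix.mulVec, dotProduct, sum_mul_sum]
    exact sum_congr rfl fun i _ => sum_congr rfl fun l _ => by ring
  simp_rw [hexpand, integral_sum_sum_mul_mul _ he, hcov]
  simp [Matrix.mul_apply]

end SecondMoment

section OperatorNorm

open scoped Matrix.Norms.L2Operator

lemma euclNorm_eq_norm_toLp {n : ℕ} (v : Fin n → ℝ) : euclNorm v = ‖WithLp.toLp 2 v‖ := by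
  simp [euclNorm, EuclideanSpace.norm_eq]

lemma sSup_euclNorm_mulVec_eq_l2_opNorm {m n : ℕ} (S : Matrix (Fin m) (Fin n) ℝ) :
    sSup ((fun θ => euclNorm (S *ᵥ θ)) '' {θ | euclNorm θ ≤ 1}) = ‖S‖ := by
  rw [Matrix.l2_opNorm_def, ← ContinuousLinearMap.sSup_unitClosedBall_eq_norm]
  congr 1
  ext r
  simp only [Set.mem_image, Set.mem_ofPred_eq, Metric.mem_closedBall, dist_zero_right]
  constructor
  · rintro ⟨θ, hθ, rfl⟩
    refine ⟨WithLp.toLp 2 θ, by rwa [← euclNorm_eq_norm_toLp], ?_⟩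
    simp [euclNorm_eq_norm_toLp]
  · rintro ⟨x, hx, rfl⟩
    refine ⟨x.ofLp, by rwa [euclNorm_eq_norm_toLp], ?_⟩
    simp [euclNorm_eq_norm_toLp, Matrix.toLpLin_apply]

lemma norm_toLp_sq_eq_dotProduct {n : Type*} [Fintype n] (x : n → ℝ) :
    ‖WithLp.toLp 2 x‖ ^ 2 = x ⬝ᵥ x := by
  rw [← real_inner_self_eq_norm_sq, EuclideanSpace.inner_toLp_toLp, star_trivial]

variable {m n : Type*} [Fintype m] [Fintype n] [DecidableEq m] [DecidableEq n]

lemma posSemidef_l2_opNorm_sq_smul_one_sub_mul_transpose (S : Matrix m n ℝ) :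
    (‖S‖ ^ 2 • (1 : Matrix m m ℝ) - S * Sᵀ).PosSemidef := by
  refine .of_dotProduct_mulVec_nonneg ?_ fun x => ?_
  · exact (Matrix.isHermitian_one.smul (.all _)).sub (Matrix.isHermitian_mul_conjTranspose_self S)
  · have hbound : ‖WithLp.toLp 2 (Sᵀ *ᵥ x)‖ ≤ ‖S‖ * ‖WithLp.toLp 2 x‖ := by
      simpa [← Matrix.conjTranspose_eq_transpose_of_trivial, Matrix.l2_opNorm_conjTranspose] using
        Sᵀ.l2_opNorm_mulVec (WithLp.toLp 2 x)
    have hquad : x ⬝ᵥ (S * Sᵀ) *ᵥ x = (Sᵀ *ᵥ x) ⬝ᵥ (Sᵀ *ᵥ x) := by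
      rw [← Matrix.mulVec_mulVec, Matrix.dotProduct_mulVec, Matrix.mulVec_transpose]
    rw [star_trivial, Matrix.sub_mulVec, dotProduct_sub, Matrix.smul_mulVec, Matrix.one_mulVec,
      dotProduct_smul, smul_eq_mul, hquad, ← norm_toLp_sq_eq_dotProduct,
      ← norm_toLp_sq_eq_dotProduct, sub_nonneg, ← mul_pow]
    exact pow_le_pow_left₀ (norm_nonneg _) hbound 2

end OperatorNorm

variable {ι : Type*} [Fintype ι] {L : Type*} [NormedAddCommGroup L] [InnerProductSpace ℝ L]

lemma sum_sum_mul_inner_nonneg {A : Matrix ι ι ℝ} (hA : A.PosSemidef) (h : ι → L) :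
    0 ≤ ∑ j, ∑ k, A j k * ⟪h j, h k⟫_ℝ := by
  simpa [dotProduct, Matrix.mulVec] using
    (hA.hadamard (Matrix.posSemidef_gram ℝ h)).dotProduct_mulVec_nonneg (fun _ => 1)

open scoped Matrix.Norms.L2Operator in
lemma sum_sum_mul_transpose_mul_inner_le [DecidableEq ι] {κ : Type*} [Fintype κ] [DecidableEq κ]
    (S : Matrix ι κ ℝ) (h : ι → L) :
    ∑ j, ∑ k, (S * Sᵀ) j k * ⟪h j, h k⟫_ℝ ≤ ‖S‖ ^ 2 * ∑ j, ‖h j‖ ^ 2 := by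
  have := sum_sum_mul_inner_nonneg (posSemidef_l2_opNorm_sq_smul_one_sub_mul_transpose S) h
  simp only [Matrix.sub_apply, Matrix.smul_apply, Matrix.one_apply, smul_eq_mul, mul_ite, mul_one,
    mul_zero, sub_mul, ite_mul, zero_mul, sum_sub_distrib, sum_ite_eq, mem_univ, ↓reduceIte,
    real_inner_self_eq_norm_sq, sub_nonneg] at this
  rwa [mul_sum]

end

theorem stmt1_general
    {L : Type*} [NormedAddCommGroup L] [InnerProductSpace ℝ L]
    {Ω : Type*} [MeasurableSpace Ω] (P : Measure Ω)
    {m m' : ℕ} (S : Matrix (Fin m) (Fin m') ℝ) (h : Fin m → L)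
    (e : Ω → Fin m' → ℝ)
    (hlaw : ∀ i, Measure.map (fun ω => e ω i) P = gaussianReal 0 1)
    (hindep : iIndepFun (fun i ω => e ω i) P) :
    (∫ ω, ‖∑ j : Fin m, S.mulVec (e ω) j • h j‖ ^ 2 ∂P)
        = ∑ j : Fin m, ∑ k : Fin m, (S * S.transpose) j k * (inner ℝ (h j) (h k) : ℝ) ∧
      ∑ j : Fin m, ∑ k : Fin m, (S * S.transpose) j k * (inner ℝ (h j) (h k) : ℝ)
        ≤ (sSup ((fun θ : Fin m' → ℝ => euclNorm (S.mulVec θ)) '' {θ | euclNorm θ ≤ 1})) ^ 2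
            * ∑ j : Fin m, ‖h j‖ ^ 2 := by
  have hgauss i : HasLaw (fun ω => e ω i) (gaussianReal 0 1) P := hasLaw_of_map_eq (hlaw i)
  have he i : MemLp (fun ω => e ω i) 2 P := (hgauss i).memLp_of_gaussianReal 2
  rw [sSup_euclNorm_mulVec_eq_l2_opNorm]
  refine ⟨?_, sum_sum_mul_transpose_mul_inner_le S h⟩
  rw [integral_norm_sum_smul_sq (memLp_mulVec_apply he S)]
  simp_rw [integral_mulVec_mul_mulVec he
    (integral_mul_eq_ite_of_iIndepFun_gaussianReal hgauss hindep) S]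

/-- Key average-case second-moment estimate (Corollary C.1): if `e` has i.i.d. standard
Gaussian coordinates, then `E‖∑_j (Se)_j h_j‖² = ∑_{j,k} (SSᵀ)_{jk} ⟨h_j, h_k⟩`, which is
bounded by `‖S‖_op² ∑_j ‖h_j‖²` where `‖S‖_op` is the Euclidean operator norm of `S`. -/
theorem stmt1
    {L : Type*} [NormedAddCommGroup L] [InnerProductSpace ℝ L]
    {Ω : Type*} [MeasurableSpace Ω] (P : Measure Ω) [IsProbabilityMeasure P]
    {m m' : ℕ} (S : Matrix (Fin m) (Fin m') ℝ) (h : Fin m → L)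
    (e : Ω → Fin m' → ℝ)
    (hmeas : ∀ i, Measurable fun ω => e ω i)
    (hlaw : ∀ i, Measure.map (fun ω => e ω i) P = gaussianReal 0 1)
    (hindep : iIndepFun (fun i ω => e ω i) P) :
    (∫ ω, ‖∑ j : Fin m, S.mulVec (e ω) j • h j‖ ^ 2 ∂P)
        = ∑ j : Fin m, ∑ k : Fin m, (S * S.transpose) j k * (inner ℝ (h j) (h k) : ℝ) ∧
      ∑ j : Fin m, ∑ k : Fin m, (S * S.transpose) j k * (inner ℝ (h j) (h k) : ℝ)
        ≤ (sSup ((fun θ : Fin m' → ℝ => euclNorm (S.mulVec θ)) '' {θ | euclNorm θ ≤ 1})) ^ 2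
            * ∑ j : Fin m, ‖h j‖ ^ 2 :=
  stmt1_general P S h e hlaw hindep
end

section
/- Let μ be a probability measure on a measurable space Z, let n ≥ 1, and let Z_1, …, Z_n be independent Z-valued random variables on a probability space, each with law μ. Let g : Z → ℝ be measurable with |g(z)| ≤ B for all z ∈ Z, and suppose ∫ g² dμ ≤ s², where B > 0 and s > 0. Then P( (1/n) ∑_{i=1}^{n} g(Z_i)² > 5 s² ) ≤ exp( − n s² / B² ); equivalently, with probability at least 1 − exp(−n s²/B²) one has (1/n) ∑_{i=1}^{n} g(Z_i)² ≤ 5 s². -/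
/-!
Chernoff bound at the temperature `t = 1 / B²`. Since `0 ≤ t g² ≤ 1`, convexity of `exp` on
`[0, 1]` gives `exp (t g²) ≤ 1 + (e - 1) t g²`, so each factor of the moment generating function is
at most `exp ((e - 1) t s²)`. Independence multiplies these `n` factors, and Markov's inequality
at level `5 n s²` leaves `exp ((e - 6) n s² / B²) ≤ exp (-n s² / B²)`.
-/

open MeasureTheory ProbabilityTheory Real

theorem Real.exp_le_one_add_mul_of_mem_Icc {u : ℝ} (hu : u ∈ Set.Icc (0 : ℝ) 1) :
    exp u ≤ 1 + (exp 1 - 1) * u := by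
  have h := convexOn_exp.2 (Set.mem_univ 0) (Set.mem_univ 1) (sub_nonneg.2 hu.2) hu.1
    (sub_add_cancel 1 u)
  simp only [smul_eq_mul, mul_zero, mul_one, zero_add, exp_zero] at h
  linarith

theorem MeasureTheory.integral_exp_le_exp_mul_integral {α : Type*} [MeasurableSpace α]
    {μ : Measure α} [IsProbabilityMeasure μ] {f : α → ℝ} (hf : AEMeasurable f μ)
    (hf01 : ∀ᵐ x ∂μ, f x ∈ Set.Icc (0 : ℝ) 1) :
    ∫ x, exp (f x) ∂μ ≤ exp ((exp 1 - 1) * ∫ x, f x ∂μ) := by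
  have hfint : Integrable f μ := .of_mem_Icc 0 1 hf hf01
  calc ∫ x, exp (f x) ∂μ ≤ ∫ x, (1 + (exp 1 - 1) * f x) ∂μ :=
        integral_mono_of_nonneg (ae_of_all _ fun x => (exp_pos _).le)
          ((integrable_const 1).add (hfint.const_mul _))
          (by filter_upwards [hf01] with x hx using exp_le_one_add_mul_of_mem_Icc hx)
    _ = 1 + (exp 1 - 1) * ∫ x, f x ∂μ := by
        rw [integral_add (integrable_const 1) (hfint.const_mul _), integral_const_mul]
        simp
    _ ≤ exp ((exp 1 - 1) * ∫ x, f x ∂μ) := by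
        linarith [add_one_le_exp ((exp 1 - 1) * ∫ x, f x ∂μ)]

theorem ProbabilityTheory.mgf_le_exp_mul_integral {Ω : Type*} [MeasurableSpace Ω]
    {μ : Measure Ω} [IsProbabilityMeasure μ] {Y : Ω → ℝ} (hY : AEMeasurable Y μ) {t : ℝ}
    (htY : ∀ᵐ ω ∂μ, t * Y ω ∈ Set.Icc (0 : ℝ) 1) :
    mgf Y μ t ≤ exp ((exp 1 - 1) * t * ∫ ω, Y ω ∂μ) := by
  rw [mul_assoc, ← integral_const_mul]
  exact integral_exp_le_exp_mul_integral (hY.const_mul t) htY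

theorem ProbabilityTheory.iIndepFun.measureReal_sum_ge_le_of_mgf_le {Ω ι : Type*}
    [MeasurableSpace Ω] {P : Measure Ω} {Y : ι → Ω → ℝ}
    (hindep : iIndepFun Y P) (hmeas : ∀ i, Measurable (Y i)) (s : Finset ι) {t c : ℝ}
    (ht : 0 ≤ t) (hint : ∀ i ∈ s, Integrable (fun ω => exp (t * Y i ω)) P)
    (hmgf : ∀ i ∈ s, mgf (Y i) P t ≤ exp c) (ε : ℝ) :
    P.real {ω | ε ≤ ∑ i ∈ s, Y i ω} ≤ exp (-t * ε + s.card * c) := by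
  have := hindep.isProbabilityMeasure
  have hchernoff := measure_ge_le_exp_mul_mgf ε ht (hindep.integrable_exp_mul_sum hmeas hint)
  simp only [Finset.sum_apply, hindep.mgf_sum hmeas] at hchernoff
  calc P.real {ω | ε ≤ ∑ i ∈ s, Y i ω} ≤ exp (-t * ε) * ∏ i ∈ s, mgf (Y i) P t := hchernoff
    _ ≤ exp (-t * ε) * ∏ _i ∈ s, exp c := by
        gcongr with i hi
        exacts [fun i _ => mgf_nonneg, hmgf i hi]
    _ = exp (-t * ε + s.card * c) := by
        rw [Finset.prod_const, ← exp_nat_mul, ← exp_add]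

theorem ProbabilityTheory.iIndepFun.measureReal_sum_ge_le_of_mem_Icc {Ω ι : Type*}
    [MeasurableSpace Ω] {P : Measure Ω} {Y : ι → Ω → ℝ}
    (hindep : iIndepFun Y P) (hmeas : ∀ i, Measurable (Y i)) (s : Finset ι) {b m : ℝ}
    (hb : 0 < b) (hbound : ∀ i ∈ s, ∀ᵐ ω ∂P, Y i ω ∈ Set.Icc 0 b) (hmean : ∀ i ∈ s, P[Y i] ≤ m)
    (ε : ℝ) :
    P.real {ω | ε ≤ ∑ i ∈ s, Y i ω} ≤ exp (-(ε - (exp 1 - 1) * s.card * m) / b) := by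
  have := hindep.isProbabilityMeasure
  have hscaled : ∀ i ∈ s, ∀ᵐ ω ∂P, b⁻¹ * Y i ω ∈ Set.Icc (0 : ℝ) 1 := fun i hi => by
    filter_upwards [hbound i hi] with ω hω
    exact ⟨by have := hω.1; positivity, by rw [inv_mul_le_one₀ hb]; exact hω.2⟩
  have hmgf : ∀ i ∈ s, mgf (Y i) P b⁻¹ ≤ exp ((exp 1 - 1) * b⁻¹ * m) := fun i hi => by
    have : 0 ≤ exp 1 - 1 := by linarith [add_one_le_exp 1]
    calc mgf (Y i) P b⁻¹ ≤ exp ((exp 1 - 1) * b⁻¹ * P[Y i]) :=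
          mgf_le_exp_mul_integral (hmeas i).aemeasurable (hscaled i hi)
      _ ≤ exp ((exp 1 - 1) * b⁻¹ * m) := by gcongr; exact hmean i hi
  have hint : ∀ i ∈ s, Integrable (fun ω => exp (b⁻¹ * Y i ω)) P := fun i hi =>
    integrable_exp_mul_of_le b⁻¹ b (by positivity) (hmeas i).aemeasurable
      (by filter_upwards [hbound i hi] with ω hω using hω.2)
  convert hindep.measureReal_sum_ge_le_of_mgf_le hmeas s (by positivity) hint hmgf ε using 2
  ring

theorem stmt3_general
    {Z : Type*} [MeasurableSpace Z] (μ : Measure Z) [IsProbabilityMeasure μ]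
    {Ω : Type*} [MeasurableSpace Ω] (P : Measure Ω) [IsProbabilityMeasure P]
    (n : ℕ) (hn : 1 ≤ n) (X : Fin n → Ω → Z)
    (hmeas : ∀ i, Measurable (X i))
    (hindep : iIndepFun X P)
    (hlaw : ∀ i, Measure.map (X i) P = μ)
    (g : Z → ℝ) (hg : Measurable g)
    (B s : ℝ) (hB : 0 < B)
    (hbd : ∀ z, |g z| ≤ B)
    (hvar : ∫ z, g z ^ 2 ∂μ ≤ s ^ 2) :
    P {ω | 5 * s ^ 2 < (1 / (n : ℝ)) * ∑ i : Fin n, g (X i ω) ^ 2}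
      ≤ ENNReal.ofReal (Real.exp (-((n : ℝ) * s ^ 2 / B ^ 2))) := by
  have hsq : ∀ z, g z ^ 2 ∈ Set.Icc 0 (B ^ 2) := fun z =>
    ⟨sq_nonneg _, sq_le_sq' (abs_le.1 (hbd z)).1 (abs_le.1 (hbd z)).2⟩
  have hmean : ∀ i ∈ Finset.univ, ∫ ω, g (X i ω) ^ 2 ∂P ≤ s ^ 2 := fun i _ => by
    rwa [← integral_map (f := fun z => g z ^ 2) (hmeas i).aemeasurable (by fun_prop), hlaw i]
  have htail := (hindep.comp _ fun _ => hg.pow_const 2).measureReal_sum_ge_le_of_mem_Icc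
    (fun i => (hg.pow_const 2).comp (hmeas i)) Finset.univ (by positivity)
    (fun i _ => ae_of_all _ fun ω => hsq _) hmean (5 * n * s ^ 2)
  have hevent : {ω | 5 * s ^ 2 < (1 / (n : ℝ)) * ∑ i : Fin n, g (X i ω) ^ 2}
      ⊆ {ω | 5 * n * s ^ 2 ≤ ∑ i : Fin n, g (X i ω) ^ 2} := fun ω hω => by
    have hnpos : (0 : ℝ) < n := by exact_mod_cast hn
    rw [Set.mem_ofPred_eq, one_div_mul_eq_div, lt_div_iff₀ hnpos] at hω
    exact (show 5 * n * s ^ 2 ≤ _ by linarith)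
  have hexponent : -(5 * n * s ^ 2 - (exp 1 - 1) * (Finset.univ : Finset (Fin n)).card * s ^ 2)
      / B ^ 2 ≤ -((n : ℝ) * s ^ 2 / B ^ 2) := by
    rw [Finset.card_univ, Fintype.card_fin, neg_div, neg_le_neg_iff]
    gcongr
    nlinarith [exp_one_lt_d9, mul_nonneg (Nat.cast_nonneg n) (sq_nonneg s)]
  rw [ENNReal.le_ofReal_iff_toReal_le (measure_ne_top _ _) (exp_pos _).le]
  exact (measureReal_mono hevent).trans (htail.trans (exp_le_exp.2 hexponent))

/-- Lemma D.5 (concentration of the empirical squared L² norm): for i.i.d. samples `X i`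
with law `μ` and a measurable function `g` bounded by `B` with `∫ g² dμ ≤ s²`, the empirical
second moment exceeds `5 s²` with probability at most `exp(-n s² / B²)`. -/
theorem stmt3
    {Z : Type*} [MeasurableSpace Z] (μ : Measure Z) [IsProbabilityMeasure μ]
    {Ω : Type*} [MeasurableSpace Ω] (P : Measure Ω) [IsProbabilityMeasure P]
    (n : ℕ) (hn : 1 ≤ n) (X : Fin n → Ω → Z)
    (hmeas : ∀ i, Measurable (X i))
    (hindep : iIndepFun X P)
    (hlaw : ∀ i, Measure.map (X i) P = μ)
    (g : Z → ℝ) (hg : Measurable g)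
    (B s : ℝ) (hB : 0 < B) (hs : 0 < s)
    (hbd : ∀ z, |g z| ≤ B)
    (hvar : ∫ z, g z ^ 2 ∂μ ≤ s ^ 2) :
    P {ω | 5 * s ^ 2 < (1 / (n : ℝ)) * ∑ i : Fin n, g (X i ω) ^ 2}
      ≤ ENNReal.ofReal (Real.exp (-((n : ℝ) * s ^ 2 / B ^ 2))) :=
  stmt3_general μ P n hn X hmeas hindep hlaw g hg B s hB hbd hvar
end

section
/- Let b > 1, C > 0 and K > 0. Let V be the space of real sequences a = (a_i)_{i≥1} with ‖a‖_I² := ∑_{i≥1} i^{b+1} a_i² < ∞, and for a square-summable sequence write ‖a‖_2² := ∑_{i≥1} a_i². Let N be a seminorm on the space of square-summable real sequences such that N(a) ≤ K ‖a‖_I^{(b−1)/(b+1)} ‖a‖_2^{2/(b+1)} for every a ∈ V. Then there exists a constant C' > 0, depending only on b, C, K, with the following property: for every integer n ≥ 1, setting τ := n^{−b/(2(b+1))} and m := ⌊n^{1/(b+1)}⌋, whenever a square-summable sequence a decomposes as a = h + e with h ∈ V, ‖h‖_I² ≤ C n τ², ‖e‖_2² ≤ C τ², and N(e)² ≤ C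 n^{−1/(b+1)}, then the truncated decomposition h' := (a_i 1_{i≤m})_{i≥1}, e' := (a_i 1_{i>m})_{i≥1} satisfies ‖h'‖_I² ≤ C' n τ², ‖e'‖_2² ≤ C' τ², and N(e')² ≤ C' n^{−1/(b+1)}. -/
open scoped BigOperators

/-- Squared `I`-norm (weighted ℓ² norm with weights `(i+1)^{b+1}`, indices shifted so that
the sequence entry `x i` plays the role of `a_{i+1}` in the paper). -/
noncomputable def normIsq (b : ℝ) (x : ℕ → ℝ) : ℝ :=
  ∑' i : ℕ, ((i : ℝ) + 1) ^ (b + 1) * x i ^ 2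

/-- Squared ℓ² norm of a sequence. -/
noncomputable def norm2sq (x : ℕ → ℝ) : ℝ :=
  ∑' i : ℕ, x i ^ 2

/-! With `m = ⌊n ^ (1 / (b + 1))⌋₊`, the coordinates `i < m` are exactly those whose weight
`(i + 1) ^ (b + 1)` is at most `n`. Hence `‖h'‖_I² + n ‖e'‖_2² = ∑ min ((i + 1) ^ (b + 1), n) a_i²`,
which for any splitting `a = h + e` is at most `2 (‖h‖_I² + n ‖e‖_2²)`: this gives the first two
bounds. For the third, `e' = (tail of h) + e - (head of e)`. The tail of `h` and the head of `e`
both satisfy `‖·‖_I² ≲ n τ²` and `‖·‖_2² ≲ τ²`, so the interpolation inequality bounds the square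
of their `N`-norm by `(n τ²) ^ ((b - 1) / (b + 1)) (τ²) ^ (2 / (b + 1)) = n ^ (-1 / (b + 1))`. -/

open Real

lemma lt_floor_rpow_one_div_iff {p t : ℝ} (hp : 0 < p) (ht : 0 ≤ t) (i : ℕ) :
    i < ⌊t ^ (1 / p)⌋₊ ↔ ((i : ℝ) + 1) ^ p ≤ t := by
  rw [Nat.lt_iff_add_one_le, Nat.le_floor_iff (by positivity), one_div, Nat.cast_add_one]
  exact le_rpow_inv_iff_of_pos (by positivity) ht hp

lemma tsum_le_tsum_of_nonneg {ι : Type*} {f g : ι → ℝ} (hf : ∀ i, 0 ≤ f i) (hfg : ∀ i, f i ≤ g i)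
    (hg : Summable g) : ∑' i, f i ≤ ∑' i, g i :=
  (hg.of_nonneg_of_le hf hfg).tsum_le_tsum hfg hg

lemma sq_rpow_neg_div_two_mul {n b : ℝ} (hn : 0 ≤ n) :
    (n ^ (-(b / (2 * (b + 1))))) ^ 2 = n ^ (-(b / (b + 1))) := by
  rw [← rpow_natCast, ← rpow_mul hn]
  congr 1
  field_simp
  ring

lemma mul_rpow_neg_div_add_one {n b : ℝ} (hn : 0 < n) (hb : b + 1 ≠ 0) :
    n * n ^ (-(b / (b + 1))) = n ^ (1 / (b + 1)) := by
  rw [mul_comm, ← rpow_add_one hn.ne']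
  congr 1
  field_simp
  ring

lemma rpow_interpolation_exponents {n b : ℝ} (hn : 0 < n) (hb : b + 1 ≠ 0) :
    (n ^ (1 / (b + 1))) ^ ((b - 1) / (b + 1)) * (n ^ (-(b / (b + 1)))) ^ (2 / (b + 1))
      = n ^ (-(1 / (b + 1))) := by
  rw [← rpow_mul hn.le, ← rpow_mul hn.le, ← rpow_add hn]
  congr 1
  field_simp
  ring

lemma rpow_mul_rpow_le_of_le_mul {x y u v c p q : ℝ} (hx : 0 ≤ x) (hy : 0 ≤ y) (hu : 0 ≤ u)
    (hv : 0 ≤ v) (hc : 0 ≤ c) (hxu : x ≤ c * u) (hyv : y ≤ c * v) (hp : 0 ≤ p) (hq : 0 ≤ q)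
    (hpq : p + q = 1) : x ^ p * y ^ q ≤ c * (u ^ p * v ^ q) :=
  calc x ^ p * y ^ q ≤ (c * u) ^ p * (c * v) ^ q := by gcongr
    _ = c ^ (p + q) * (u ^ p * v ^ q) := by
      rw [mul_rpow hc hu, mul_rpow hc hv, rpow_add_of_nonneg hc hp hq]
      ring
    _ = c * (u ^ p * v ^ q) := by rw [hpq, rpow_one]

lemma sq_le_of_le_mul_sqrt_rpow {N K X Y p q : ℝ} (hN : 0 ≤ N) (hX : 0 ≤ X) (hY : 0 ≤ Y)
    (h : N ≤ K * √X ^ p * √Y ^ q) : N ^ 2 ≤ K ^ 2 * (X ^ p * Y ^ q) := by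
  have sqrt_rpow_sq : ∀ {Z r : ℝ}, 0 ≤ Z → (√Z ^ r) ^ 2 = Z ^ r := fun hZ => by
    rw [sq, ← mul_rpow (sqrt_nonneg _) (sqrt_nonneg _), mul_self_sqrt hZ]
  calc N ^ 2 ≤ (K * √X ^ p * √Y ^ q) ^ 2 := pow_le_pow_left₀ hN h 2
    _ = K ^ 2 * (X ^ p * Y ^ q) := by rw [mul_pow, mul_pow, sqrt_rpow_sq hX, sqrt_rpow_sq hY]; ring

def truncBelow (m : ℕ) (x : ℕ → ℝ) : ℕ → ℝ := fun i => if i < m then x i else 0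

def truncAbove (m : ℕ) (x : ℕ → ℝ) : ℕ → ℝ := fun i => if i < m then 0 else x i

section Truncation

variable {b t : ℝ} {m : ℕ} {x h e : ℕ → ℝ}

lemma summable_sq_of_summable_sq_add (hhe : Summable fun i => (h + e) i ^ 2)
    (hh : Summable fun i => h i ^ 2) : Summable fun i => e i ^ 2 :=
  ((hhe.mul_left 2).add (hh.mul_left 2)).of_nonneg_of_le (fun _ => sq_nonneg _) fun i => by
    simp only [Pi.add_apply]
    nlinarith [sq_nonneg (2 * h i + e i)]

lemma truncAbove_add : truncAbove m (h + e) = truncAbove m h + truncAbove m e := by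
  ext i
  by_cases hi : i < m <;> simp [truncAbove, hi]

lemma truncAbove_eq_sub_truncBelow : truncAbove m x = x - truncBelow m x := by
  ext i
  by_cases hi : i < m <;> simp [truncAbove, truncBelow, hi]

lemma sq_truncBelow_le (i : ℕ) : truncBelow m x i ^ 2 ≤ x i ^ 2 := by
  unfold truncBelow
  split_ifs <;> simp [sq_nonneg]

lemma sq_truncAbove_le (i : ℕ) : truncAbove m x i ^ 2 ≤ x i ^ 2 := by
  unfold truncAbove
  split_ifs <;> simp [sq_nonneg]

lemma normIsq_nonneg (b : ℝ) (x : ℕ → ℝ) : 0 ≤ normIsq b x :=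
  tsum_nonneg fun _ => by positivity

lemma norm2sq_nonneg (x : ℕ → ℝ) : 0 ≤ norm2sq x :=
  tsum_nonneg fun _ => sq_nonneg _

lemma summable_sq_of_summable_weighted (hb : 0 ≤ b + 1)
    (hx : Summable fun i : ℕ => ((i : ℝ) + 1) ^ (b + 1) * x i ^ 2) :
    Summable fun i => x i ^ 2 :=
  hx.of_nonneg_of_le (fun _ => sq_nonneg _) fun _ =>
    le_mul_of_one_le_left (sq_nonneg _) (one_le_rpow (by simp) hb)

lemma summable_weighted_truncBelow (b : ℝ) (m : ℕ) (x : ℕ → ℝ) :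
    Summable fun i : ℕ => ((i : ℝ) + 1) ^ (b + 1) * truncBelow m x i ^ 2 :=
  summable_of_ne_finset_zero (s := Finset.range m) fun i hi => by
    simp [truncBelow, Finset.mem_range.not.mp hi]

lemma summable_weighted_truncAbove
    (hx : Summable fun i : ℕ => ((i : ℝ) + 1) ^ (b + 1) * x i ^ 2) :
    Summable fun i : ℕ => ((i : ℝ) + 1) ^ (b + 1) * truncAbove m x i ^ 2 :=
  hx.of_nonneg_of_le (fun _ => by positivity) fun i =>
    mul_le_mul_of_nonneg_left (sq_truncAbove_le i) (by positivity)

lemma normIsq_truncAbove_le (hx : Summable fun i : ℕ => ((i : ℝ) + 1) ^ (b + 1) * x i ^ 2) :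
    normIsq b (truncAbove m x) ≤ normIsq b x :=
  tsum_le_tsum_of_nonneg (fun _ => by positivity)
    (fun i => mul_le_mul_of_nonneg_left (sq_truncAbove_le i) (by positivity)) hx

lemma norm2sq_truncBelow_le (hx : Summable fun i => x i ^ 2) :
    norm2sq (truncBelow m x) ≤ norm2sq x :=
  tsum_le_tsum_of_nonneg (fun _ => sq_nonneg _) sq_truncBelow_le hx

lemma normIsq_truncBelow_le (ht : 0 ≤ t) (hw : ∀ i < m, ((i : ℝ) + 1) ^ (b + 1) ≤ t)
    (hx : Summable fun i => x i ^ 2) : normIsq b (truncBelow m x) ≤ t * norm2sq x := by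
  rw [norm2sq, ← tsum_mul_left]
  refine tsum_le_tsum_of_nonneg (fun _ => by positivity) (fun i => ?_) (hx.mul_left t)
  unfold truncBelow
  split_ifs with hi
  · exact mul_le_mul_of_nonneg_right (hw i hi) (sq_nonneg _)
  · simp only [ne_eq, OfNat.ofNat_ne_zero, not_false_eq_true, zero_pow, mul_zero]
    positivity

lemma mul_norm2sq_truncAbove_le (ht : 0 ≤ t) (hw : ∀ i, m ≤ i → t ≤ ((i : ℝ) + 1) ^ (b + 1))
    (hx : Summable fun i : ℕ => ((i : ℝ) + 1) ^ (b + 1) * x i ^ 2) :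
    t * norm2sq (truncAbove m x) ≤ normIsq b x := by
  rw [norm2sq, ← tsum_mul_left]
  refine tsum_le_tsum_of_nonneg (fun _ => by positivity) (fun i => ?_) hx
  unfold truncAbove
  split_ifs with hi
  · simp only [ne_eq, OfNat.ofNat_ne_zero, not_false_eq_true, zero_pow, mul_zero]
    positivity
  · exact mul_le_mul_of_nonneg_right (hw i (not_lt.mp hi)) (sq_nonneg _)

lemma normIsq_truncBelow_add_mul_norm2sq_truncAbove_le (ht : 0 ≤ t)
    (hlow : ∀ i < m, ((i : ℝ) + 1) ^ (b + 1) ≤ t)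
    (hhigh : ∀ i, m ≤ i → t ≤ ((i : ℝ) + 1) ^ (b + 1))
    (hh : Summable fun i : ℕ => ((i : ℝ) + 1) ^ (b + 1) * h i ^ 2)
    (he : Summable fun i => e i ^ 2) :
    normIsq b (truncBelow m (h + e)) + t * norm2sq (truncAbove m (h + e))
      ≤ 2 * (normIsq b h + t * norm2sq e) := by
  set w : ℕ → ℝ := fun i => ((i : ℝ) + 1) ^ (b + 1)
  have hw (i : ℕ) : 0 ≤ w i := by positivity
  -- termwise, the left side is `min (w i) t * (h i + e i) ^ 2`
  have hpt (i : ℕ) : w i * truncBelow m (h + e) i ^ 2 + t * truncAbove m (h + e) i ^ 2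
      ≤ 2 * (w i * h i ^ 2 + t * e i ^ 2) := by
    by_cases hi : i < m
    · simp only [truncBelow, truncAbove, hi, if_true, Pi.add_apply]
      nlinarith [mul_nonneg (hw i) (sq_nonneg (h i - e i)),
        mul_le_mul_of_nonneg_right (hlow i hi) (sq_nonneg (e i))]
    · simp only [truncBelow, truncAbove, hi, if_false, Pi.add_apply]
      nlinarith [mul_nonneg ht (sq_nonneg (h i - e i)),
        mul_le_mul_of_nonneg_right (hhigh i (not_lt.mp hi)) (sq_nonneg (h i))]
  have hG : Summable fun i => 2 * (w i * h i ^ 2 + t * e i ^ 2) :=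
    (hh.add (he.mul_left t)).mul_left 2
  have hlowS : Summable fun i => w i * truncBelow m (h + e) i ^ 2 :=
    hG.of_nonneg_of_le (fun i => by positivity) fun i =>
      (le_add_of_nonneg_right (by positivity)).trans (hpt i)
  have hhighS : Summable fun i => t * truncAbove m (h + e) i ^ 2 :=
    hG.of_nonneg_of_le (fun i => by positivity) fun i =>
      (le_add_of_nonneg_left (by positivity)).trans (hpt i)
  calc normIsq b (truncBelow m (h + e)) + t * norm2sq (truncAbove m (h + e))
      = ∑' i, (w i * truncBelow m (h + e) i ^ 2 + t * truncAbove m (h + e) i ^ 2) := by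
        rw [norm2sq, ← tsum_mul_left, normIsq, hlowS.tsum_add hhighS]
    _ ≤ ∑' i, 2 * (w i * h i ^ 2 + t * e i ^ 2) := hlowS.add hhighS |>.tsum_le_tsum hpt hG
    _ = 2 * (normIsq b h + t * norm2sq e) := by
        rw [tsum_mul_left, hh.tsum_add (he.mul_left t), tsum_mul_left, normIsq, norm2sq]

lemma normIsq_truncBelow_le_and_norm2sq_truncAbove_le {c B : ℝ} (ht : 0 < t)
    (hlow : ∀ i < m, ((i : ℝ) + 1) ^ (b + 1) ≤ t)
    (hhigh : ∀ i, m ≤ i → t ≤ ((i : ℝ) + 1) ^ (b + 1))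
    (hh : Summable fun i : ℕ => ((i : ℝ) + 1) ^ (b + 1) * h i ^ 2)
    (he : Summable fun i => e i ^ 2)
    (hIh : normIsq b h ≤ c * (t * B)) (hLe : norm2sq e ≤ c * B) :
    normIsq b (truncBelow m (h + e)) ≤ 4 * c * (t * B) ∧
      norm2sq (truncAbove m (h + e)) ≤ 4 * c * B := by
  have hsum : normIsq b (truncBelow m (h + e)) + t * norm2sq (truncAbove m (h + e))
      ≤ 4 * c * (t * B) :=
    (normIsq_truncBelow_add_mul_norm2sq_truncAbove_le ht.le hlow hhigh hh he).trans
      (by nlinarith [mul_le_mul_of_nonneg_left hLe ht.le])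
  refine ⟨(le_add_of_nonneg_right (mul_nonneg ht.le (norm2sq_nonneg _))).trans hsum, ?_⟩
  refine le_of_mul_le_mul_left ?_ ht
  calc t * norm2sq (truncAbove m (h + e)) ≤ 4 * c * (t * B) :=
        (le_add_of_nonneg_left (normIsq_nonneg b _)).trans hsum
    _ = t * (4 * c * B) := by ring

lemma seminorm_truncAbove_add_sq_le (p : Seminorm ℝ (ℕ → ℝ)) {K c B : ℝ} (hb : 1 < b)
    (hc : 0 ≤ c) (ht : 0 < t) (hB : 0 ≤ B)
    (hinterp : ∀ x : ℕ → ℝ, Summable (fun i : ℕ => ((i : ℝ) + 1) ^ (b + 1) * x i ^ 2) →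
      p x ≤ K * √(normIsq b x) ^ ((b - 1) / (b + 1)) * √(norm2sq x) ^ (2 / (b + 1)))
    (hlow : ∀ i < m, ((i : ℝ) + 1) ^ (b + 1) ≤ t)
    (hhigh : ∀ i, m ≤ i → t ≤ ((i : ℝ) + 1) ^ (b + 1))
    (hh : Summable fun i : ℕ => ((i : ℝ) + 1) ^ (b + 1) * h i ^ 2)
    (he : Summable fun i => e i ^ 2)
    (hIh : normIsq b h ≤ c * (t * B)) (hLe : norm2sq e ≤ c * B) :
    p (truncAbove m (h + e)) ^ 2
      ≤ 3 * (2 * K ^ 2 * (c * ((t * B) ^ ((b - 1) / (b + 1)) * B ^ (2 / (b + 1)))) + p e ^ 2) := by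
  set M := K ^ 2 * (c * ((t * B) ^ ((b - 1) / (b + 1)) * B ^ (2 / (b + 1))))
  have hbound (x : ℕ → ℝ) (hx : Summable fun i : ℕ => ((i : ℝ) + 1) ^ (b + 1) * x i ^ 2)
      (hIx : normIsq b x ≤ c * (t * B)) (hLx : norm2sq x ≤ c * B) : p x ^ 2 ≤ M := by
    refine (sq_le_of_le_mul_sqrt_rpow (apply_nonneg p x) (normIsq_nonneg b x) (norm2sq_nonneg x)
      (hinterp x hx)).trans (mul_le_mul_of_nonneg_left ?_ (sq_nonneg K))
    exact rpow_mul_rpow_le_of_le_mul (normIsq_nonneg b x) (norm2sq_nonneg x) (by positivity) hB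
      hc hIx hLx (div_nonneg (by linarith) (by linarith)) (div_nonneg zero_le_two (by linarith))
      (by field_simp; ring)
  have htail : p (truncAbove m h) ^ 2 ≤ M := by
    refine hbound _ (summable_weighted_truncAbove hh) ((normIsq_truncAbove_le hh).trans hIh) ?_
    refine le_of_mul_le_mul_left ?_ ht
    calc t * norm2sq (truncAbove m h) ≤ normIsq b h := mul_norm2sq_truncAbove_le ht.le hhigh hh
      _ ≤ t * (c * B) := by linarith
  have hhead : p (truncBelow m e) ^ 2 ≤ M :=
    hbound _ (summable_weighted_truncBelow b m e)
      ((normIsq_truncBelow_le ht.le hlow he).trans (by nlinarith))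
      ((norm2sq_truncBelow_le he).trans hLe)
  have htri : p (truncAbove m (h + e)) ≤ p (truncAbove m h) + p e + p (truncBelow m e) := by
    rw [truncAbove_add, truncAbove_eq_sub_truncBelow (x := e), add_assoc]
    exact (map_add_le_add p _ _).trans (add_le_add_right (map_sub_le_add p _ _) _)
  nlinarith [apply_nonneg p (truncAbove m h), apply_nonneg p e, apply_nonneg p (truncBelow m e),
    apply_nonneg p (truncAbove m (h + e)), sq_nonneg (p (truncAbove m h) - p e),
    sq_nonneg (p (truncAbove m h) - p (truncBelow m e)), sq_nonneg (p e - p (truncBelow m e))]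

end Truncation

theorem stmt4_general (b C K : ℝ) (hb : 1 < b) (hC : 0 < C) :
    ∃ C' : ℝ, 0 < C' ∧
      ∀ N : (ℕ → ℝ) → ℝ,
        (∀ x y : ℕ → ℝ, N (x + y) ≤ N x + N y) →
        (∀ (c : ℝ) (x : ℕ → ℝ), N (c • x) = |c| * N x) →
        (∀ x : ℕ → ℝ, Summable (fun i : ℕ => ((i : ℝ) + 1) ^ (b + 1) * x i ^ 2) →
          N x ≤ K * Real.sqrt (normIsq b x) ^ ((b - 1) / (b + 1))
                  * Real.sqrt (norm2sq x) ^ (2 / (b + 1))) →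
        ∀ n : ℕ, 1 ≤ n →
          ∀ a h e : ℕ → ℝ,
            Summable (fun i : ℕ => a i ^ 2) →
            a = h + e →
            Summable (fun i : ℕ => ((i : ℝ) + 1) ^ (b + 1) * h i ^ 2) →
            normIsq b h ≤ C * n * ((n : ℝ) ^ (-(b / (2 * (b + 1))))) ^ 2 →
            norm2sq e ≤ C * ((n : ℝ) ^ (-(b / (2 * (b + 1))))) ^ 2 →
            N e ^ 2 ≤ C * (n : ℝ) ^ (-(1 / (b + 1))) →
            normIsq b (fun i => if i < ⌊(n : ℝ) ^ (1 / (b + 1))⌋₊ then a i else 0)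
                ≤ C' * n * ((n : ℝ) ^ (-(b / (2 * (b + 1))))) ^ 2 ∧
              norm2sq (fun i => if i < ⌊(n : ℝ) ^ (1 / (b + 1))⌋₊ then 0 else a i)
                ≤ C' * ((n : ℝ) ^ (-(b / (2 * (b + 1))))) ^ 2 ∧
              N (fun i => if i < ⌊(n : ℝ) ^ (1 / (b + 1))⌋₊ then 0 else a i) ^ 2
                ≤ C' * (n : ℝ) ^ (-(1 / (b + 1))) := by
  refine ⟨4 * C * (1 + 2 * K ^ 2), by positivity, ?_⟩
  rintro N hadd hsmul hinterp n hn - h e ha rfl hh hIh hLe hNe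
  have hn0 : (0 : ℝ) < n := by exact_mod_cast hn
  have hb1 : 0 < b + 1 := by linarith
  rw [sq_rpow_neg_div_two_mul hn0.le] at hIh hLe ⊢
  set B := (n : ℝ) ^ (-(b / (b + 1)))
  set m := ⌊(n : ℝ) ^ (1 / (b + 1))⌋₊
  have hm := lt_floor_rpow_one_div_iff hb1 hn0.le
  have hlow : ∀ i < m, ((i : ℝ) + 1) ^ (b + 1) ≤ n := fun i => (hm i).mp
  have hhigh : ∀ i, m ≤ i → (n : ℝ) ≤ ((i : ℝ) + 1) ^ (b + 1) := fun i hi =>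
    (not_le.mp (mt (hm i).mpr hi.not_gt)).le
  have he := summable_sq_of_summable_sq_add ha (summable_sq_of_summable_weighted hb1.le hh)
  rw [mul_assoc] at hIh ⊢
  obtain ⟨hIh', hLe'⟩ :=
    normIsq_truncBelow_le_and_norm2sq_truncAbove_le hn0 hlow hhigh hh he hIh hLe
  let p : Seminorm ℝ (ℕ → ℝ) := Seminorm.of N hadd (by simpa only [norm_eq_abs] using hsmul)
  have hN := seminorm_truncAbove_add_sq_le p hb hC.le hn0 (by positivity) hinterp hlow hhigh hh he
    hIh hLe
  rw [mul_rpow_neg_div_add_one hn0 hb1.ne', rpow_interpolation_exponents hn0 hb1.ne'] at hN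
  have hC' : 4 * C ≤ 4 * C * (1 + 2 * K ^ 2) :=
    le_mul_of_one_le_right (by positivity) (by nlinarith)
  refine ⟨hIh'.trans (by gcongr), hLe'.trans (by gcongr), hN.trans ?_⟩
  calc 3 * (2 * K ^ 2 * (C * n ^ (-(1 / (b + 1)))) + N e ^ 2)
      ≤ 3 * C * (1 + 2 * K ^ 2) * n ^ (-(1 / (b + 1))) := by nlinarith
    _ ≤ 4 * C * (1 + 2 * K ^ 2) * n ^ (-(1 / (b + 1))) := by gcongr; norm_num

/-- Lemma D.1 (ii) (sieve sets for Gaussian priors): if a square-summable sequence `a`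
decomposes as `a = h + e` with `‖h‖_I² ≤ C n τ²`, `‖e‖_2² ≤ C τ²`, `N(e)² ≤ C n^{-1/(b+1)}`
(`τ = n^{-b/(2(b+1))}`, `N` a seminorm satisfying the interpolation inequality
`N(x) ≤ K ‖x‖_I^{(b-1)/(b+1)} ‖x‖_2^{2/(b+1)}`), then the spectral truncation at level
`m = ⌊n^{1/(b+1)}⌋` gives a decomposition satisfying the same bounds with a constant `C'`
depending only on `b`, `C`, `K`. -/
theorem stmt4 (b C K : ℝ) (hb : 1 < b) (hC : 0 < C) (hK : 0 < K) :
    ∃ C' : ℝ, 0 < C' ∧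
      ∀ N : (ℕ → ℝ) → ℝ,
        (∀ x y : ℕ → ℝ, N (x + y) ≤ N x + N y) →
        (∀ (c : ℝ) (x : ℕ → ℝ), N (c • x) = |c| * N x) →
        (∀ x : ℕ → ℝ, Summable (fun i : ℕ => ((i : ℝ) + 1) ^ (b + 1) * x i ^ 2) →
          N x ≤ K * Real.sqrt (normIsq b x) ^ ((b - 1) / (b + 1))
                  * Real.sqrt (norm2sq x) ^ (2 / (b + 1))) →
        ∀ n : ℕ, 1 ≤ n →
          ∀ a h e : ℕ → ℝ,
            Summable (fun i : ℕ => a i ^ 2) →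
            a = h + e →
            Summable (fun i : ℕ => ((i : ℝ) + 1) ^ (b + 1) * h i ^ 2) →
            normIsq b h ≤ C * n * ((n : ℝ) ^ (-(b / (2 * (b + 1))))) ^ 2 →
            norm2sq e ≤ C * ((n : ℝ) ^ (-(b / (2 * (b + 1))))) ^ 2 →
            N e ^ 2 ≤ C * (n : ℝ) ^ (-(1 / (b + 1))) →
            normIsq b (fun i => if i < ⌊(n : ℝ) ^ (1 / (b + 1))⌋₊ then a i else 0)
                ≤ C' * n * ((n : ℝ) ^ (-(b / (2 * (b + 1))))) ^ 2 ∧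
              norm2sq (fun i => if i < ⌊(n : ℝ) ^ (1 / (b + 1))⌋₊ then 0 else a i)
                ≤ C' * ((n : ℝ) ^ (-(b / (2 * (b + 1))))) ^ 2 ∧
              N (fun i => if i < ⌊(n : ℝ) ^ (1 / (b + 1))⌋₊ then 0 else a i) ^ 2
                ≤ C' * (n : ℝ) ^ (-(1 / (b + 1))) :=
  stmt4_general b C K hb hC
end

section
/- Let μ be a finite measure on a measurable space Z, let Φ : Z → Z̄ be a measurable map into a measurable space Z̄, and let μ̄ := Φ_*μ be the pushforward measure. Let k̄ : Z̄ × Z̄ → ℝ be a bounded measurable function, and define the pulled-back kernel k(z, z') := k̄(Φ(z), Φ(z')). Suppose λ ≠ 0 and g ∈ L²(μ) satisfies ∫ k(z, z') g(z') dμ(z') = λ g(z) for μ-almost every z. Then there exists ḡ ∈ L²(μ̄) such that g = ḡ ∘ Φ μ-almost everywhere and ∫ k̄(w̄, w) ḡ(w) dμ̄(w) = λ ḡ(w̄) for μ̄-almost every w̄. -/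
/-!
Put `ḡ(w) := λ⁻¹ ∫ k̄(w, Φ z') g(z') dμ(z')`. The eigen-equation of `g` says exactly that
`g = ḡ ∘ Φ` μ-a.e., so `ḡ` inherits square-integrability from `g` through the pushforward. By the
change of variables `w' = Φ z'` and `ḡ ∘ Φ = g`, the `k̄`-operator applied to `ḡ` at `w` is
`∫ k̄(w, Φ z') g(z') dμ(z') = λ ḡ(w)`, for every `w`.
-/

open MeasureTheory

theorem aestronglyMeasurable_integral_kernel_mul {X Y : Type*} [MeasurableSpace X]
    [MeasurableSpace Y] {K : X → Y → ℝ} (hK : Measurable (Function.uncurry K)) (ν : Measure X)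
    {μ : Measure Y} [SFinite μ] {g : Y → ℝ} (hg : AEStronglyMeasurable g μ) :
    AEStronglyMeasurable (fun x => ∫ y, K x y * g y ∂μ) ν :=
  (hK.aestronglyMeasurable.mul hg.comp_snd).integral_prod_right'

section

variable {Z Zbar : Type*} [MeasurableSpace Z]

noncomputable def latentEigenfunction (μ : Measure Z) (Φ : Z → Zbar) (kbar : Zbar → Zbar → ℝ)
    (lam : ℝ) (g : Z → ℝ) (w : Zbar) : ℝ :=
  lam⁻¹ * ∫ z, kbar w (Φ z) * g z ∂μ

theorem ae_eq_latentEigenfunction_comp {μ : Measure Z} {Φ : Z → Zbar}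
    {kbar : Zbar → Zbar → ℝ} {lam : ℝ} (hlam : lam ≠ 0) {g : Z → ℝ}
    (heig : ∀ᵐ z ∂μ, ∫ z', kbar (Φ z) (Φ z') * g z' ∂μ = lam * g z) :
    g =ᵐ[μ] latentEigenfunction μ Φ kbar lam g ∘ Φ := by
  filter_upwards [heig] with z hz
  rw [Function.comp_apply, latentEigenfunction, hz, inv_mul_cancel_left₀ hlam]

variable [MeasurableSpace Zbar]

theorem memLp_map_of_ae_eq_comp {μ : Measure Z} {Φ : Z → Zbar} (hΦ : Measurable Φ)
    {p : ENNReal} {g : Z → ℝ} {gbar : Zbar → ℝ} (hg : MemLp g p μ)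
    (hgbar : AEStronglyMeasurable gbar (μ.map Φ)) (hcomp : g =ᵐ[μ] gbar ∘ Φ) :
    MemLp gbar p (μ.map Φ) :=
  (memLp_map_measure_iff hgbar hΦ.aemeasurable).2 (hg.ae_eq hcomp)

theorem integral_map_mul_of_ae_eq_comp {μ : Measure Z} {Φ : Z → Zbar} (hΦ : Measurable Φ)
    {k gbar : Zbar → ℝ} (hk : Measurable k) (hgbar : AEStronglyMeasurable gbar (μ.map Φ))
    {g : Z → ℝ} (hcomp : g =ᵐ[μ] gbar ∘ Φ) :
    ∫ w, k w * gbar w ∂(μ.map Φ) = ∫ z, k (Φ z) * g z ∂μ := by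
  rw [integral_map (f := fun w => k w * gbar w) hΦ.aemeasurable
    (hk.aestronglyMeasurable.mul hgbar)]
  refine integral_congr_ae ?_
  filter_upwards [hcomp] with z hz
  rw [hz, Function.comp_apply]

end

theorem stmt6_general
    {Z Zbar : Type*} [MeasurableSpace Z] [MeasurableSpace Zbar]
    (μ : Measure Z) [IsFiniteMeasure μ]
    (Φ : Z → Zbar) (hΦ : Measurable Φ)
    (kbar : Zbar → Zbar → ℝ) (hkm : Measurable (Function.uncurry kbar))
    (lam : ℝ) (hlam : lam ≠ 0)
    (g : Z → ℝ) (hg : MemLp g 2 μ)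
    (heig : ∀ᵐ z ∂μ, ∫ z', kbar (Φ z) (Φ z') * g z' ∂μ = lam * g z) :
    ∃ gbar : Zbar → ℝ, MemLp gbar 2 (μ.map Φ) ∧
      (g =ᵐ[μ] fun z => gbar (Φ z)) ∧
      (∀ᵐ w ∂(μ.map Φ), ∫ w', kbar w w' * gbar w' ∂(μ.map Φ) = lam * gbar w) := by
  set gbar := latentEigenfunction μ Φ kbar lam g
  have hgbar : AEStronglyMeasurable gbar (μ.map Φ) :=
    aestronglyMeasurable_const.mul <| aestronglyMeasurable_integral_kernel_mul
      (K := fun w z => kbar w (Φ z)) (hkm.comp (measurable_fst.prodMk (hΦ.comp measurable_snd)))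
      _ hg.aestronglyMeasurable
  have hcomp : g =ᵐ[μ] gbar ∘ Φ := ae_eq_latentEigenfunction_comp hlam heig
  refine ⟨gbar, memLp_map_of_ae_eq_comp hΦ hg hgbar hcomp, hcomp, ae_of_all _ fun w => ?_⟩
  rw [integral_map_mul_of_ae_eq_comp hΦ (k := kbar w) (hkm.comp measurable_prodMk_left) hgbar
    hcomp]
  exact (mul_inv_cancel_left₀ hlam _).symm

/-- Claim B.2 (ii), substantive direction: an `L²(μ)` eigenfunction of the pulled-back kernel
`k(z,z') = k̄(Φ z, Φ z')` with eigenvalue `λ ≠ 0` is (a.e.) of the form `ḡ ∘ Φ` for an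
`L²(Φ_*μ)` eigenfunction `ḡ` of `k̄` with the same eigenvalue. -/
theorem stmt6
    {Z Zbar : Type*} [MeasurableSpace Z] [MeasurableSpace Zbar]
    (μ : Measure Z) [IsFiniteMeasure μ]
    (Φ : Z → Zbar) (hΦ : Measurable Φ)
    (kbar : Zbar → Zbar → ℝ) (hkm : Measurable (Function.uncurry kbar))
    (M : ℝ) (hbd : ∀ x y, |kbar x y| ≤ M)
    (lam : ℝ) (hlam : lam ≠ 0)
    (g : Z → ℝ) (hg : MemLp g 2 μ)
    (heig : ∀ᵐ z ∂μ, ∫ z', kbar (Φ z) (Φ z') * g z' ∂μ = lam * g z) :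
    ∃ gbar : Zbar → ℝ, MemLp gbar 2 (μ.map Φ) ∧
      (g =ᵐ[μ] fun z => gbar (Φ z)) ∧
      (∀ᵐ w ∂(μ.map Φ), ∫ w', kbar w w' * gbar w' ∂(μ.map Φ) = lam * gbar w) :=
  stmt6_general μ Φ hΦ kbar hkm lam hlam g hg heig
end
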